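/- Let β ∈ V_1 ⊖ S_1 and let n ≥ 1 be an integer. Then q_n(h(q_{n+1}(h_n^r β))) = − q_n(h_{n−1}^r β). -/

import Mathlib

noncomputable section

open scoped ComplexInnerProductSpace

namespace UCoxMasa

/-- The universal Coxeter matrix on `Fin L`: all off-diagonal entries are `0` (representing ∞). -/
def Mat (L : ℕ) : CoxeterMatrix (Fin L) where
  M := fun i j => if i = j then 1 else 0
  isSymm := by
    ext i j
    by_cases h : i = j <;> simp [Matrix.transpose, h, eq_comm]
  diagonal := fun i => by simp
  off_diagonal := fun i j h => by simp [h]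

/-- The universal Coxeter group on `L` generators: free product of `L` copies of `ℤ/2ℤ`. -/
abbrev W (L : ℕ) : Type := (Mat L).Group

/-- The distinguished Coxeter system of `W L`. -/
def cs (L : ℕ) : CoxeterSystem (Mat L) (W L) := CoxeterMatrix.toCoxeterSystem (Mat L)

/-- The simple reflection associated to `i : Fin L`. -/
def σ {L : ℕ} (i : Fin L) : W L := (cs L).simple i

/-- Word length on `W L` with respect to the generating set of simple reflections. -/
def len {L : ℕ} (w : W L) : ℕ := (cs L).length w

/-- The Hilbert space `ℓ²(W)`. -/
abbrev H (L : ℕ) : Type := lp (fun _ : W L => ℂ) 2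

/-- The standard orthonormal basis vector `δ_w` of `ℓ²(W)`. -/
def δ {L : ℕ} (w : W L) : H L :=
  letI := Classical.decEq (W L)
  lp.single 2 w 1

/-- `V l`: the linear span of `{δ_w : ℓ(w) = l}`. -/
def V (L : ℕ) (l : ℕ) : Submodule ℂ (H L) :=
  Submodule.span ℂ {x : H L | ∃ w : W L, len w = l ∧ x = δ w}

/-- `S_l`: the linear span of `q_l(h V_{l-1}) ∪ q_l(R_h V_{l-1})`,
given the projections `Q`, the operator `h` and the right operator `Rh`. -/
def Sl (L : ℕ) (Q : ℕ → (H L →L[ℂ] H L)) (h Rh : H L →L[ℂ] H L) (l : ℕ) :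
    Submodule ℂ (H L) :=
  Submodule.span ℂ
    ({x : H L | ∃ y ∈ V L (l - 1), x = Q l (h y)} ∪
      {x : H L | ∃ y ∈ V L (l - 1), x = Q l (Rh y)})

end UCoxMasa


/-!
Write `β = ∑ cᵢ δ_{sᵢ}`; orthogonality to `q₁(h δ_e) = ∑ δ_s` gives `∑ cᵢ = 0`.
Modulo shorter words `T^r_w δ_u = δ_{uw}`, hence `q_{m+1}(h^r_m δ_s)` is the sum of the `δ_{sw}`
with `|w| = m` and `|sw| = m + 1`. Reduced words of the universal Coxeter group have no two equal
adjacent letters, so they are unique normal forms and every `x ≠ e` has a unique left descent,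
its first letter `t`; hence `q_n(h δ_x) = δ_{tx}` when `|x| = n + 1`. So at `δ_s` the left-hand
side is the sum of the `δ_w`, `|w| = n`, over the words not starting with `s`, and
`q_n(h^r_{n-1} δ_s)` is the sum over those starting with `s`. Together they give
`∑_{|w| = n} δ_w`, which does not depend on `s` and is killed by `∑ cᵢ = 0`.
-/

namespace UCoxMasa

theorem _root_.CoxeterSystem.IsReduced.isChain_ne {B W : Type*} [Group W] {M : CoxeterMatrix B}
    {cs : CoxeterSystem M W} {ω : List B} (hω : cs.IsReduced ω) : ω.IsChain (· ≠ ·) := by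
  induction ω with
  | nil => exact List.isChain_nil
  | cons a t ih =>
    cases t with
    | nil => exact List.isChain_singleton a
    | cons b t =>
      refine List.isChain_cons_cons.2 ⟨?_, ih (by simpa using hω.drop 1)⟩
      rintro rfl
      have := (hω.take 2).eq
      simp [CoxeterSystem.wordProd_cons] at this

variable {L : ℕ}

lemma len_σ (i : Fin L) : len (σ i) = 1 := (cs L).length_simple i

lemma len_mul_le (u v : W L) : len (u * v) ≤ len u + len v := (cs L).length_mul_le u v

lemma len_σ_mul (w : W L) (i : Fin L) :
    len (σ i * w) = len w + 1 ∨ len (σ i * w) + 1 = len w :=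
  (cs L).length_simple_mul w i

lemma len_mul_σ (w : W L) (i : Fin L) :
    len (w * σ i) = len w + 1 ∨ len (w * σ i) + 1 = len w :=
  (cs L).length_mul_simple w i

lemma σ_mul_σ_mul (i : Fin L) (w : W L) : σ i * (σ i * w) = w :=
  (cs L).simple_mul_simple_cancel_left i

/-- The normal forms of the elements of `W L`. -/
def NormalWord (L : ℕ) : Type := {ω : List (Fin L) // ω.IsChain (· ≠ ·)}

namespace NormalWord

def nil : NormalWord L := ⟨[], List.isChain_nil⟩

def simpleMul (i : Fin L) (ω : NormalWord L) : NormalWord L :=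
  if h : ω.1.head? = some i then ⟨ω.1.tail, ω.2.tail⟩
  else ⟨i :: ω.1, List.isChain_cons.2 ⟨by rintro b hb rfl; exact h hb, ω.2⟩⟩

lemma simpleMul_cons_of_ne {i : Fin L} {ω : List (Fin L)} (hω : ω.IsChain (· ≠ ·))
    (h : ω.head? ≠ some i) : (simpleMul i ⟨ω, hω⟩).1 = i :: ω := by
  simp [simpleMul, h]

lemma simpleMul_involutive (i : Fin L) : Function.Involutive (simpleMul i) := by
  rintro ⟨ω, hω⟩
  apply Subtype.ext
  by_cases h : ω.head? = some i
  · obtain ⟨t, rfl⟩ : ∃ t, ω = i :: t := by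
      cases ω with
      | nil => simp at h
      | cons a t => simp at h; exact ⟨t, by rw [h]⟩
    have ht : t.head? ≠ some i := by
      cases t with
      | nil => simp
      | cons b t => simpa [eq_comm] using (List.isChain_cons_cons.1 hω).1
    simp [simpleMul, ht]
  · simp [simpleMul, h]

end NormalWord

lemma isLiftable_simpleMul :
    (Mat L).IsLiftable fun i => (NormalWord.simpleMul_involutive i).toPerm := by
  intro i j
  by_cases h : i = j
  · subst h
    ext ω
    simpa [Mat] using NormalWord.simpleMul_involutive i ω
  · simp [Mat, h]

def normalWordAction (L : ℕ) : W L →* Equiv.Perm (NormalWord L) :=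
  (cs L).lift ⟨_, isLiftable_simpleMul⟩

lemma normalWordAction_σ (i : Fin L) :
    normalWordAction L (σ i) = (NormalWord.simpleMul_involutive i).toPerm :=
  (cs L).lift_apply_simple isLiftable_simpleMul i

def nf (w : W L) : List (Fin L) := (normalWordAction L w NormalWord.nil).1

lemma nf_wordProd {ω : List (Fin L)} (hω : ω.IsChain (· ≠ ·)) : nf ((cs L).wordProd ω) = ω := by
  suffices normalWordAction L ((cs L).wordProd ω) NormalWord.nil = ⟨ω, hω⟩ from
    congrArg Subtype.val this
  induction ω with
  | nil => rfl
  | cons a t ih =>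
    have ht : t.head? ≠ some a := by
      cases t with
      | nil => simp
      | cons b t => simpa [eq_comm] using (List.isChain_cons_cons.1 hω).1
    rw [CoxeterSystem.wordProd_cons, map_mul, Equiv.Perm.mul_apply, ih hω.tail]
    rw [← σ, normalWordAction_σ]
    exact Subtype.ext (NormalWord.simpleMul_cons_of_ne hω.tail ht)

lemma nf_eq_cons_of_len_σ_mul_lt {w : W L} {i : Fin L} (h : len (σ i * w) < len w) :
    ∃ ω, nf w = i :: ω := by
  obtain ⟨ω, hω, hw⟩ := (cs L).exists_isReduced (σ i * w)
  have hw' : (cs L).wordProd (i :: ω) = w := by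
    rw [CoxeterSystem.wordProd_cons, ← hw, ← σ, σ_mul_σ_mul]
  have hred : (cs L).IsReduced (i :: ω) := by
    have := len_σ_mul w i
    rw [CoxeterSystem.IsReduced, hw', List.length_cons, ← hω.eq, ← hw]
    change len w = len (σ i * w) + 1
    omega
  exact ⟨ω, by rw [← hw', nf_wordProd hred.isChain_ne]⟩

lemma eq_of_len_σ_mul_lt {w : W L} {i j : Fin L} (hi : len (σ i * w) < len w)
    (hj : len (σ j * w) < len w) : i = j := by
  obtain ⟨ω, hω⟩ := nf_eq_cons_of_len_σ_mul_lt hi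
  obtain ⟨ω', hω'⟩ := nf_eq_cons_of_len_σ_mul_lt hj
  rw [hω] at hω'
  exact (List.cons.inj hω').1

lemma σ_injective : Function.Injective (σ : Fin L → W L) := by
  intro i j hij
  have hlt : ∀ k : Fin L, len (σ k * σ k) < len (σ k) := fun k => by
    rw [← mul_one (σ k * σ k), mul_assoc, σ_mul_σ_mul, len_σ]
    simp [len]
  exact eq_of_len_σ_mul_lt (hlt i) (hij ▸ hlt j)

lemma finite_setOf_len_eq (n : ℕ) : {w : W L | len w = n}.Finite :=
  ((List.finite_length_eq (Fin L) n).image (cs L).wordProd).subset fun w hw => by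
    obtain ⟨ω, hω, rfl⟩ := (cs L).exists_isReduced w
    exact ⟨ω, hω.eq.symm.trans hw, rfl⟩

def sphere (L n : ℕ) : Finset (W L) := (finite_setOf_len_eq n).toFinset

@[simp] lemma mem_sphere {n : ℕ} {w : W L} : w ∈ sphere L n ↔ len w = n :=
  Set.Finite.mem_toFinset _

lemma tsum_subtype_len_eq {E : Type*} [AddCommMonoid E] [TopologicalSpace E] (n : ℕ)
    (f : W L → E) : ∑' w : {w : W L // len w = n}, f w = ∑ w ∈ sphere L n, f w := by
  rw [← Finset.tsum_subtype]
  exact (Equiv.subtypeEquivRight fun w : W L => (mem_sphere (n := n) (w := w)).symm).tsum_eq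
    fun w => f w

lemma δ_apply_self (w : W L) : δ w w = 1 := by
  classical
  simp [δ]

lemma δ_apply_of_ne {v w : W L} (h : v ≠ w) : δ v w = 0 := by
  classical
  simp [δ, Ne.symm h]

lemma inner_δ_left (w : W L) (x : H L) : ⟪δ w, x⟫ = x w := by
  classical
  simp [δ, lp.inner_single_left]

lemma exists_eq_sum_of_mem_V_one {β : H L} (hβ : β ∈ V L 1) :
    ∃ c : Fin L → ℂ, β = ∑ i, c i • δ (σ i) := by
  have hV : {x : H L | ∃ w : W L, len w = 1 ∧ x = δ w} = Set.range fun i => δ (σ i) := by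
    ext x
    constructor
    · rintro ⟨w, hw, rfl⟩
      obtain ⟨i, rfl⟩ := (cs L).length_eq_one_iff.1 hw
      exact ⟨i, rfl⟩
    · rintro ⟨i, rfl⟩
      exact ⟨σ i, len_σ i, rfl⟩
  rw [V, hV] at hβ
  obtain ⟨c, hc⟩ := (Submodule.mem_span_range_iff_exists_fun ℂ).1 hβ
  exact ⟨c, hc.symm⟩

lemma inner_sum_smul_δσ_sum_δσ (c : Fin L → ℂ) :
    ⟪∑ i, c i • δ (σ i), ∑ j, δ (σ j)⟫ = starRingEnd ℂ (∑ i, c i) := by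
  have h1 (i : Fin L) : ⟪δ (σ i), ∑ j, δ (σ j)⟫ = 1 := by
    rw [inner_sum, Finset.sum_eq_single i (fun j _ hj => ?_) (by simp), inner_δ_left,
      δ_apply_self]
    rw [inner_δ_left, δ_apply_of_ne (σ_injective.ne hj)]
  simp only [sum_inner, inner_smul_left, h1, mul_one, map_sum]

/-- `VLt L k` is the span of the `V l` with `l < k`. -/
def VLt (L k : ℕ) : Submodule ℂ (H L) :=
  Submodule.span ℂ {x | ∃ w : W L, len w < k ∧ x = δ w}

lemma δ_mem_VLt {k : ℕ} {w : W L} (h : len w < k) : δ w ∈ VLt L k :=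
  Submodule.subset_span ⟨w, h, rfl⟩

lemma VLt_mono {k k' : ℕ} (h : k ≤ k') : VLt L k ≤ VLt L k' :=
  Submodule.span_mono fun _ ⟨w, hw, hx⟩ => ⟨w, hw.trans_le h, hx⟩

lemma apply_mem_of_mem_VLt (f : H L →L[ℂ] H L) {M : Submodule ℂ (H L)} {k : ℕ} {x : H L}
    (hf : ∀ w : W L, len w < k → f (δ w) ∈ M) (hx : x ∈ VLt L k) : f x ∈ M :=
  (Submodule.span_le (p := M.comap (f : H L →ₗ[ℂ] H L)).2
    (by rintro _ ⟨w, hw, rfl⟩; exact hf w hw)) hx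

def IsLeftHecke (p : ℂ) (T : Fin L → H L →L[ℂ] H L) : Prop :=
  ∀ (s : Fin L) (w : W L),
    T s (δ w) = if len (σ s * w) < len w then δ (σ s * w) + p • δ w else δ (σ s * w)

def IsRightHecke (p : ℂ) (Tr : Fin L → H L →L[ℂ] H L) : Prop :=
  ∀ (s : Fin L) (w : W L),
    Tr s (δ w) = if len (w * σ s) < len w then δ (w * σ s) + p • δ w else δ (w * σ s)

def IsLevelProjection (Q : ℕ → H L →L[ℂ] H L) : Prop :=
  ∀ (l : ℕ) (w : W L), Q l (δ w) = if len w = l then δ w else 0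

section Operators

variable {p : ℂ} {Q : ℕ → H L →L[ℂ] H L} {T Tr : Fin L → H L →L[ℂ] H L}
  {Twr : W L → H L →L[ℂ] H L}

lemma eq_zero_of_mem_VLt (hQ : IsLevelProjection Q) {k l : ℕ} (hkl : k ≤ l) {x : H L}
    (hx : x ∈ VLt L k) : Q l x = 0 :=
  (Submodule.mem_bot ℂ).1 <| apply_mem_of_mem_VLt (Q l)
    (fun w hw => by rw [hQ, if_neg (by omega)]; exact Submodule.zero_mem _) hx

lemma Tr_δ_sub_δ_mul_mem_VLt (hTr : IsRightHecke p Tr) (s : Fin L) (u : W L) :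
    Tr s (δ u) - δ (u * σ s) ∈ VLt L (len u + 1) := by
  rw [hTr]
  split_ifs
  · simpa using Submodule.smul_mem _ p (δ_mem_VLt (lt_add_one (len u)))
  · simp

lemma Tr_mem_VLt_succ (hTr : IsRightHecke p Tr) (s : Fin L) {k : ℕ} {x : H L}
    (hx : x ∈ VLt L k) : Tr s x ∈ VLt L (k + 1) :=
  apply_mem_of_mem_VLt (Tr s) (fun w hw => by
    have hlen : len (w * σ s) < k + 1 := by
      have := len_mul_le w (σ s)
      rw [len_σ] at this
      omega
    simpa using Submodule.add_mem _
      (VLt_mono (by omega) (Tr_δ_sub_δ_mul_mem_VLt hTr s w)) (δ_mem_VLt hlen)) hx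

lemma Twr_δ_sub_δ_mul_mem_VLt (hTr : IsRightHecke p Tr) (hTwr1 : Twr 1 = 1)
    (hTwrrec : ∀ (s : Fin L) (w : W L), len (w * σ s) < len w → Twr w = Tr s ∘L Twr (w * σ s))
    (w u : W L) : Twr w (δ u) - δ (u * w) ∈ VLt L (len u + len w) := by
  induction hn : len w generalizing w with
  | zero =>
    obtain rfl : w = 1 := (cs L).length_eq_zero_iff.1 hn
    simp [hTwr1]
  | succ m ih =>
    obtain ⟨s, hs⟩ := (cs L).exists_rightDescent_of_ne_one (w := w)
      (by rintro rfl; simp [len] at hn)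
    change len (w * σ s) < len w at hs
    have hm : len (w * σ s) = m := by
      have := len_mul_σ w s
      omega
    have huw : u * (w * σ s) * σ s = u * w := by simp [σ, mul_assoc]
    have hle : len (u * (w * σ s)) ≤ len u + m := hm ▸ len_mul_le _ _
    rw [hTwrrec s w hs, ContinuousLinearMap.comp_apply, ← huw,
      ← sub_add_sub_cancel _ (Tr s (δ (u * (w * σ s)))), ← map_sub]
    exact Submodule.add_mem _ (Tr_mem_VLt_succ hTr s (ih _ hm))
      (VLt_mono (by omega) (Tr_δ_sub_δ_mul_mem_VLt hTr s _))

lemma Q_sum_Twr_δ_eq (hQ : IsLevelProjection Q) (hTr : IsRightHecke p Tr) (hTwr1 : Twr 1 = 1)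
    (hTwrrec : ∀ (s : Fin L) (w : W L), len (w * σ s) < len w → Twr w = Tr s ∘L Twr (w * σ s))
    (u : W L) (n : ℕ) :
    Q (len u + n) ((∑ w ∈ sphere L n, Twr w) (δ u)) =
      ∑ w ∈ sphere L n, Q (len u + n) (δ (u * w)) := by
  rw [sum_apply, map_sum]
  refine Finset.sum_congr rfl fun w hw => ?_
  rw [← sub_eq_zero, ← map_sub]
  exact eq_zero_of_mem_VLt hQ (by rw [mem_sphere.1 hw])
    (Twr_δ_sub_δ_mul_mem_VLt hTr hTwr1 hTwrrec w u)

/-- Only the unique left descent `i` of `x` brings `δ_x` down one level. -/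
lemma Q_sum_T_δ_of_len_σ_mul_lt (hT : IsLeftHecke p T) (hQ : IsLevelProjection Q)
    {m : ℕ} {x : W L} {i : Fin L} (hx : len x = m + 1) (hi : len (σ i * x) < len x) :
    Q m ((∑ s, T s) (δ x)) = δ (σ i * x) := by
  rw [sum_apply, map_sum, Finset.sum_eq_single i]
  · rw [hT, if_pos hi, map_add, map_smul, hQ, hQ, if_pos (by have := len_σ_mul x i; omega),
      if_neg (by omega), smul_zero, add_zero]
  · intro s _ hs
    have hs' : ¬ len (σ s * x) < len x := fun h => hs (eq_of_len_σ_mul_lt h hi)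
    rw [hT, if_neg hs', hQ, if_neg (by have := len_σ_mul x s; omega)]
  · simp

lemma Q_sum_T_Q_sum_Twr_δσ (hT : IsLeftHecke p T) (hQ : IsLevelProjection Q)
    (hTr : IsRightHecke p Tr) (hTwr1 : Twr 1 = 1)
    (hTwrrec : ∀ (s : Fin L) (w : W L), len (w * σ s) < len w → Twr w = Tr s ∘L Twr (w * σ s))
    (i : Fin L) (n : ℕ) :
    Q n ((∑ s, T s) (Q (n + 1) ((∑ w ∈ sphere L n, Twr w) (δ (σ i))))) =
      ∑ w ∈ sphere L n, if len (σ i * w) < len w then 0 else δ w := by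
  have h := Q_sum_Twr_δ_eq hQ hTr hTwr1 hTwrrec (σ i) n
  rw [len_σ, add_comm] at h
  rw [h, map_sum, map_sum]
  refine Finset.sum_congr rfl fun w hw => ?_
  have hwn := mem_sphere.1 hw
  have := len_σ_mul w i
  rw [hQ]
  split_ifs with h₁ h₂ h₂
  · omega
  · rw [Q_sum_T_δ_of_len_σ_mul_lt hT hQ h₁ (by rw [σ_mul_σ_mul]; omega), σ_mul_σ_mul]
  · simp
  · omega

lemma Q_sum_Twr_δσ (hQ : IsLevelProjection Q) (hTr : IsRightHecke p Tr) (hTwr1 : Twr 1 = 1)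
    (hTwrrec : ∀ (s : Fin L) (w : W L), len (w * σ s) < len w → Twr w = Tr s ∘L Twr (w * σ s))
    (i : Fin L) {n : ℕ} (hn : 1 ≤ n) :
    Q n ((∑ w ∈ sphere L (n - 1), Twr w) (δ (σ i))) =
      ∑ w ∈ sphere L n, if len (σ i * w) < len w then δ w else 0 := by
  have h := Q_sum_Twr_δ_eq hQ hTr hTwr1 hTwrrec (σ i) (n - 1)
  rw [len_σ, Nat.add_sub_cancel' hn] at h
  simp only [h, hQ n, ← Finset.sum_filter]
  refine Finset.sum_nbij' (σ i * ·) (σ i * ·) ?_ ?_ ?_ ?_ ?_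
  · intro w hw
    simp only [Finset.mem_filter, mem_sphere] at hw ⊢
    rw [σ_mul_σ_mul]
    omega
  · intro x hx
    simp only [Finset.mem_filter, mem_sphere] at hx ⊢
    have := len_σ_mul x i
    rw [σ_mul_σ_mul]
    omega
  · exact fun w _ => σ_mul_σ_mul i w
  · exact fun x _ => σ_mul_σ_mul i x
  · exact fun _ _ => rfl

lemma sum_δσ_mem_Sl (hT : IsLeftHecke p T) (hQ : IsLevelProjection Q) (Rh : H L →L[ℂ] H L) :
    ∑ s, δ (σ s) ∈ Sl L Q (∑ s, T s) Rh 1 := by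
  refine Submodule.subset_span
    (Or.inl ⟨δ 1, Submodule.subset_span ⟨1, (cs L).length_one, rfl⟩, ?_⟩)
  rw [sum_apply, map_sum]
  refine Finset.sum_congr rfl fun s _ => ?_
  rw [hT, mul_one, if_neg (by rw [len_σ]; simp [len]), hQ, if_pos (len_σ s)]

end Operators

theorem statement8_general
    (L : ℕ) (p : ℝ)
    (T : Fin L → H L →L[ℂ] H L)
    (hT : ∀ (s : Fin L) (w : W L),
      T s (δ w) =
        if len (σ s * w) < len w then δ (σ s * w) + (p : ℂ) • δ w else δ (σ s * w))
    (h : H L →L[ℂ] H L) (hh : h = ∑ s, T s)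
    (Tr : Fin L → H L →L[ℂ] H L)
    (hTr : ∀ (s : Fin L) (w : W L),
      Tr s (δ w) =
        if len (w * σ s) < len w then δ (w * σ s) + (p : ℂ) • δ w else δ (w * σ s))
    (Rh : H L →L[ℂ] H L)
    (Twr : W L → H L →L[ℂ] H L) (hTwr1 : Twr 1 = 1)
    (hTwrrec : ∀ (s : Fin L) (w : W L), len (w * σ s) < len w →
      Twr w = Tr s ∘L Twr (w * σ s))
    (hnr : ℕ → H L →L[ℂ] H L)
    (hhnr : ∀ n : ℕ, hnr n = ∑' w : {w : W L // len w = n}, Twr (w : W L))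
    (Q : ℕ → H L →L[ℂ] H L)
    (hQ : ∀ (l : ℕ) (w : W L), Q l (δ w) = if len w = l then δ w else 0)
    (β : H L)
    (hβmem : β ∈ V L 1)
    (hβperp : ∀ y ∈ Sl L Q h Rh 1, ⟪β, y⟫ = 0)
    (n : ℕ) (hn1 : 1 ≤ n) :
    Q n (h (Q (n + 1) (hnr n β))) = - Q n (hnr (n - 1) β) := by
  subst hh
  obtain ⟨c, rfl⟩ := exists_eq_sum_of_mem_V_one hβmem
  have hc : ∑ i, c i = 0 := by
    have := hβperp _ (sum_δσ_mem_Sl hT hQ Rh)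
    rwa [inner_sum_smul_δσ_sum_δσ, map_eq_zero] at this
  have hnr_eq (k : ℕ) : hnr k = ∑ w ∈ sphere L k, Twr w :=
    (hhnr k).trans (tsum_subtype_len_eq k _)
  have hσ (i : Fin L) : Q n ((∑ s, T s) (Q (n + 1) (hnr n (δ (σ i))))) +
      Q n (hnr (n - 1) (δ (σ i))) = ∑ w ∈ sphere L n, δ w := by
    rw [hnr_eq, hnr_eq, Q_sum_T_Q_sum_Twr_δσ hT hQ hTr hTwr1 hTwrrec,
      Q_sum_Twr_δσ hQ hTr hTwr1 hTwrrec i hn1, ← Finset.sum_add_distrib]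
    exact Finset.sum_congr rfl fun w _ => by split_ifs <;> simp
  rw [← add_eq_zero_iff_eq_neg]
  simp only [map_sum, map_smul, ← Finset.sum_add_distrib, ← smul_add, hσ, ← Finset.sum_smul, hc,
    zero_smul]

theorem statement8
    (L : ℕ) (hL : 3 ≤ L) (q p : ℝ) (hq : 0 < q) (hq1 : q ≤ 1)
    (hp : p = (q - 1) / Real.sqrt q)
    (T : Fin L → H L →L[ℂ] H L)
    (hT : ∀ (s : Fin L) (w : W L),
      T s (δ w) =
        if len (σ s * w) < len w then δ (σ s * w) + (p : ℂ) • δ w else δ (σ s * w))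
    (h : H L →L[ℂ] H L) (hh : h = ∑ s, T s)
    (Tr : Fin L → H L →L[ℂ] H L)
    (hTr : ∀ (s : Fin L) (w : W L),
      Tr s (δ w) =
        if len (w * σ s) < len w then δ (w * σ s) + (p : ℂ) • δ w else δ (w * σ s))
    (Rh : H L →L[ℂ] H L) (hRh : Rh = ∑ s, Tr s)
    (Twr : W L → H L →L[ℂ] H L) (hTwr1 : Twr 1 = 1)
    (hTwrrec : ∀ (s : Fin L) (w : W L), len (w * σ s) < len w →
      Twr w = Tr s ∘L Twr (w * σ s))
    (hnr : ℕ → H L →L[ℂ] H L)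
    (hhnr : ∀ n : ℕ, hnr n = ∑' w : {w : W L // len w = n}, Twr (w : W L))
    (Q : ℕ → H L →L[ℂ] H L)
    (hQ : ∀ (l : ℕ) (w : W L), Q l (δ w) = if len w = l then δ w else 0)
    (β : H L)
    (hβmem : β ∈ V L 1)
    (hβperp : ∀ y ∈ Sl L Q h Rh 1, ⟪β, y⟫ = 0)
    (n : ℕ) (hn1 : 1 ≤ n) :
    Q n (h (Q (n + 1) (hnr n β))) = - Q n (hnr (n - 1) β) :=
  statement8_general L p T hT h hh Tr hTr Rh Twr hTwr1 hTwrrec hnr hhnr Q hQ β hβmem hβperp n hn1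

end UCoxMasa
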